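/- arXiv:1511.05240 — 3 statements merged into one kernel-verified Lean document; each statement's English description precedes it below -/
import Mathlib

section
/- McDiarmid's bounded differences inequality: Let X_1, ..., X_n be independent random variables with X_i taking values in 𝒳_i, let X = (X_1, ..., X_n), and let f : 𝒳 → ℝ be measurable with c-bounded differences on 𝒳 = ∏_{i=1}^n 𝒳_i, where c ∈ (ℝ⁺)^n. Let μ = E[f(X)]. Then for all ε ≥ 0, P[f(X) ≥ μ + ε] ≤ exp(−2ε² / Σ_{i=1}^n c_i²). -/
open MeasureTheory ProbabilityTheory
open scoped Classical

open Real
open scoped NNReal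

/-!
Independence makes the law of `X` the product of its marginals, so it suffices to show that
`f - ∫ f` is sub-Gaussian with variance proxy `∑ cᵢ² / 4` under a product of probability
measures; the Chernoff bound then gives `exp (-2ε² / ∑ cᵢ²)`. Peel off the first coordinate:
for fixed remaining coordinates, `f` oscillates by at most `|c₀|` in the first one, so by
Hoeffding's lemma its deviation from the partial average `g` over the first coordinate is
sub-Gaussian with proxy `c₀² / 4`. The partial average `g` has bounded differences with the
remaining constants, so by induction `g - ∫ g` is sub-Gaussian with the remaining proxy, and
by Fubini the two proxies add.
-/

def HasBoundedDifferences {ι : Type*} [Fintype ι] {𝒳 : ι → Type*} (f : (∀ i, 𝒳 i) → ℝ)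
    (c : ι → ℝ) : Prop :=
  ∀ x y : ∀ i, 𝒳 i, |f x - f y| ≤ ∑ i, if x i ≠ y i then c i else 0

namespace HasBoundedDifferences

lemma insertNth {n : ℕ} {𝒳 : Fin (n + 1) → Type*} {f : (∀ i, 𝒳 i) → ℝ} {c : Fin (n + 1) → ℝ}
    (hf : HasBoundedDifferences f c) (i : Fin (n + 1)) (x : 𝒳 i) :
    HasBoundedDifferences (fun y => f (Fin.insertNth i x y)) (fun j => c (i.succAbove j)) := by
  intro y y'
  refine (hf _ _).trans_eq ?_
  simp [Fin.sum_univ_succAbove _ i]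

variable {ι : Type*} [Fintype ι] {𝒳 : ι → Type*} {f : (∀ i, 𝒳 i) → ℝ} {c : ι → ℝ}

lemma abs_sub_le_of_forall_ne_eq (hf : HasBoundedDifferences f c) {x y : ∀ i, 𝒳 i} (i : ι)
    (hxy : ∀ j ≠ i, x j = y j) : |f x - f y| ≤ |c i| := by
  refine (hf x y).trans ?_
  rw [Finset.sum_eq_single_of_mem i (Finset.mem_univ i) fun j _ hj =>
    if_neg (not_not.2 (hxy j hj))]
  split_ifs
  exacts [abs_nonneg (c i), le_abs_self (c i)]

lemma integral {α : Type*} [MeasurableSpace α] {μ : Measure α} [IsProbabilityMeasure μ]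
    {F : α → (∀ i, 𝒳 i) → ℝ} (hF : ∀ a, HasBoundedDifferences (F a) c)
    (hint : ∀ y, Integrable (fun a => F a y) μ) :
    HasBoundedDifferences (fun y => ∫ a, F a y ∂μ) c := by
  intro x y
  rw [← integral_sub (hint x) (hint y)]
  simpa using norm_integral_le_of_norm_le_const (μ := μ) (f := fun a => F a x - F a y)
    (Filter.Eventually.of_forall fun a => hF a x y)

end HasBoundedDifferences

namespace ProbabilityTheory

lemma HasSubgaussianMGF.integrable_of_sub_const {Ω : Type*} [MeasurableSpace Ω]
    {μ : Measure Ω} [IsFiniteMeasure μ] {X : Ω → ℝ} {m : ℝ} {c : ℝ≥0}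
    (h : HasSubgaussianMGF (fun ω => X ω - m) c μ) : Integrable X μ :=
  integrable_add_const_iff.1 (by simpa only [sub_eq_add_neg] using h.integrable)

lemma hasSubgaussianMGF_of_abs_sub_le {Ω : Type*} [MeasurableSpace Ω] {μ : Measure Ω}
    [IsProbabilityMeasure μ] {X : Ω → ℝ} (hX : AEMeasurable X μ) {c : ℝ}
    (hc : ∀ ω ω', |X ω - X ω'| ≤ c) :
    HasSubgaussianMGF (fun ω => X ω - μ[X]) ((‖c‖₊ / 2) ^ 2) μ := by
  have := nonempty_of_isProbabilityMeasure μ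
  have hbdd (ω : Ω) : BddBelow (Set.range X) :=
    ⟨X ω - c, Set.forall_mem_range.2 fun ω' => by linarith [(abs_le.1 (hc ω ω')).2]⟩
  have hmem (ω : Ω) : X ω ∈ Set.Icc (⨅ ω', X ω') ((⨅ ω', X ω') + c) := by
    refine ⟨ciInf_le (hbdd ω) ω, ?_⟩
    have := le_ciInf fun ω' => (by linarith [(abs_le.1 (hc ω ω')).2] : X ω - c ≤ X ω')
    linarith
  simpa using hasSubgaussianMGF_of_mem_Icc hX (Filter.Eventually.of_forall hmem)

lemma hasSubgaussianMGF_prod_of_sections {α β : Type*} [MeasurableSpace α] [MeasurableSpace β]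
    {μ : Measure α} {ν : Measure β} [SFinite μ] [SFinite ν] {F : α × β → ℝ} (hF : Measurable F)
    {m : ℝ} {c₁ c₂ : ℝ≥0}
    (h₁ : ∀ y, HasSubgaussianMGF (fun x => F (x, y) - ∫ x', F (x', y) ∂μ) c₁ μ)
    (h₂ : HasSubgaussianMGF (fun y => ∫ x, F (x, y) ∂μ - m) c₂ ν) :
    HasSubgaussianMGF (fun z => F z - m) (c₁ + c₂) (μ.prod ν) := by
  set g : β → ℝ := fun y => ∫ x, F (x, y) ∂μ
  have hsplit (t : ℝ) (x : α) (y : β) :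
      exp (t * (F (x, y) - m)) = exp (t * (F (x, y) - g y)) * exp (t * (g y - m)) := by
    rw [← exp_add, ← mul_add, sub_add_sub_cancel]
  have hsection_le (t : ℝ) (y : β) :
      ∫ x, exp (t * (F (x, y) - m)) ∂μ ≤ exp (c₁ * t ^ 2 / 2) * exp (t * (g y - m)) := by
    simp_rw [hsplit, integral_mul_const]
    gcongr
    exact (h₁ y).mgf_le t
  have hint (t : ℝ) : Integrable (fun z => exp (t * (F z - m))) (μ.prod ν) := by
    have hmeas : Measurable fun z => exp (t * (F z - m)) := by fun_prop
    refine (integrable_prod_iff' hmeas.aestronglyMeasurable).2 ⟨?_, ?_⟩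
    · refine Filter.Eventually.of_forall fun y => ?_
      simp_rw [hsplit t _ y]
      exact ((h₁ y).integrable_exp_mul t).mul_const _
    · refine ((h₂.integrable_exp_mul t).const_mul (exp (c₁ * t ^ 2 / 2))).mono'
        hmeas.norm.stronglyMeasurable.integral_prod_left'.aestronglyMeasurable
        (Filter.Eventually.of_forall fun y => ?_)
      simp_rw [Real.norm_eq_abs, abs_of_pos (exp_pos _)]
      rw [abs_of_nonneg (integral_nonneg fun _ => (exp_pos _).le)]
      exact hsection_le t y
  refine ⟨hint, fun t => ?_⟩
  calc mgf (fun z => F z - m) (μ.prod ν) t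
      = ∫ y, ∫ x, exp (t * (F (x, y) - m)) ∂μ ∂ν := integral_prod_symm _ (hint t)
    _ ≤ ∫ y, exp (c₁ * t ^ 2 / 2) * exp (t * (g y - m)) ∂ν :=
      integral_mono (hint t).integral_prod_right ((h₂.integrable_exp_mul t).const_mul _)
        (hsection_le t)
    _ = exp (c₁ * t ^ 2 / 2) * mgf (fun y => g y - m) ν t := integral_const_mul _ _
    _ ≤ exp (c₁ * t ^ 2 / 2) * exp (c₂ * t ^ 2 / 2) := by gcongr; exact h₂.mgf_le t
    _ = exp (↑(c₁ + c₂) * t ^ 2 / 2) := by rw [← exp_add]; push_cast; ring_nf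

end ProbabilityTheory

theorem HasBoundedDifferences.hasSubgaussianMGF_pi {n : ℕ} {𝒳 : Fin n → Type*}
    [∀ i, MeasurableSpace (𝒳 i)] {μ : ∀ i, Measure (𝒳 i)} [∀ i, IsProbabilityMeasure (μ i)]
    {f : (∀ i, 𝒳 i) → ℝ} {c : Fin n → ℝ} (hfc : HasBoundedDifferences f c) (hf : Measurable f) :
    HasSubgaussianMGF (fun x => f x - ∫ x, f x ∂Measure.pi μ) (∑ i, (‖c i‖₊ / 2) ^ 2)
      (Measure.pi μ) := by
  induction n with
  | zero =>
    have hconst (x : ∀ i, 𝒳 i) : f x - ∫ x, f x ∂Measure.pi μ = 0 := by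
      rw [show f = fun _ => f x from funext fun y => congrArg f (Subsingleton.elim y x)]
      simp
    simp [hconst]
  | succ n ih =>
    have he := measurePreserving_piFinSuccAbove μ 0
    set e := MeasurableEquiv.piFinSuccAbove 𝒳 0
    set F : 𝒳 0 × (∀ j, 𝒳 (Fin.succAbove 0 j)) → ℝ := f ∘ e.symm
    have hF : Measurable F := hf.comp e.symm.measurable
    have hFe (x) : F (e x) = f x := congrArg f (e.symm_apply_apply x)
    have h₁ (y) : HasSubgaussianMGF (fun x => F (x, y) - ∫ x', F (x', y) ∂μ 0)
        ((‖c 0‖₊ / 2) ^ 2) (μ 0) := by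
      simpa only [nnnorm_abs] using hasSubgaussianMGF_of_abs_sub_le (X := fun x => F (x, y))
        (hF.comp measurable_prodMk_right).aemeasurable
        fun x x' => hfc.abs_sub_le_of_forall_ne_eq 0 fun j hj => by
          obtain ⟨j, rfl⟩ := Fin.exists_succAbove_eq hj
          simp only [e, MeasurableEquiv.piFinSuccAbove_symm_apply, Fin.insertNthEquiv_apply,
            Fin.insertNth_apply_succAbove]
    have hg : HasBoundedDifferences (fun y => ∫ x, F (x, y) ∂μ 0)
        (fun j => c (Fin.succAbove 0 j)) :=
      HasBoundedDifferences.integral (fun x => hfc.insertNth 0 x)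
        fun y => (h₁ y).integrable_of_sub_const
    have h := hasSubgaussianMGF_prod_of_sections hF h₁
      (ih (μ := fun j => μ (Fin.succAbove 0 j)) hg
        hF.stronglyMeasurable.integral_prod_left'.measurable)
    have hmean : ∫ x, f x ∂Measure.pi μ =
        ∫ y, ∫ x, F (x, y) ∂μ 0 ∂Measure.pi fun j => μ (Fin.succAbove 0 j) := by
      rw [← integral_prod_symm F h.integrable_of_sub_const, ← he.integral_comp']
      simp only [hFe]
    rw [hmean, Fin.sum_univ_succAbove _ 0]
    rw [← he.map_eq] at h
    simpa only [Function.comp_def, hFe] using h.of_map e.measurable.aemeasurable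

theorem mcdiarmid_bounded_differences_general
    {n : ℕ} {Ω : Type*} [MeasureSpace Ω] [IsProbabilityMeasure (ℙ : Measure Ω)]
    {𝒳 : Fin n → Type*} [∀ i, MeasurableSpace (𝒳 i)]
    (X : ∀ i, Ω → 𝒳 i) (hXm : ∀ i, Measurable (X i))
    (hXindep : iIndepFun X ℙ)
    (c : Fin n → ℝ)
    (f : (∀ i, 𝒳 i) → ℝ) (hf : Measurable f)
    (hbd : ∀ x y : ∀ i, 𝒳 i, |f x - f y| ≤ ∑ i, if x i ≠ y i then c i else 0)
    (ε : ℝ) (hε : 0 ≤ ε) :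
    ℙ {ω | f (fun i => X i ω) ≥ (∫ ω, f (fun i => X i ω)) + ε}
      ≤ ENNReal.ofReal (Real.exp (-2 * ε ^ 2 / ∑ i, c i ^ 2)) := by
  have hT : Measurable fun ω i => X i ω := measurable_pi_lambda _ hXm
  have (i : Fin n) : IsProbabilityMeasure ((ℙ : Measure Ω).map (X i)) :=
    Measure.isProbabilityMeasure_map (hXm i).aemeasurable
  have hpi := HasBoundedDifferences.hasSubgaussianMGF_pi
    (μ := fun i => (ℙ : Measure Ω).map (X i)) hbd hf
  rw [← hXindep.map_fun_eq_pi_map fun i => (hXm i).aemeasurable,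
    integral_map hT.aemeasurable hf.aestronglyMeasurable] at hpi
  have htail := (hpi.of_map hT.aemeasurable).measure_ge_le hε
  have hproxy : 2 * ((∑ i, (‖c i‖₊ / 2) ^ 2 : ℝ≥0) : ℝ) = (∑ i, c i ^ 2) / 2 := by
    push_cast
    simp only [Real.norm_eq_abs, sq_abs, div_pow, ← Finset.sum_div]
    ring
  rw [hproxy] at htail
  rw [← ofReal_measureReal]
  refine ENNReal.ofReal_le_ofReal (le_of_eq_of_le ?_ (htail.trans_eq ?_))
  · simp only [Function.comp_def, le_sub_iff_add_le', ge_iff_le]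
  · ring_nf

/-- McDiarmid's bounded differences inequality. -/
theorem mcdiarmid_bounded_differences
    {n : ℕ} {Ω : Type*} [MeasureSpace Ω] [IsProbabilityMeasure (ℙ : Measure Ω)]
    {𝒳 : Fin n → Type*} [∀ i, MeasurableSpace (𝒳 i)]
    (X : ∀ i, Ω → 𝒳 i) (hXm : ∀ i, Measurable (X i))
    (hXindep : iIndepFun X ℙ)
    (c : Fin n → ℝ) (hc : ∀ i, 0 ≤ c i)
    (f : (∀ i, 𝒳 i) → ℝ) (hf : Measurable f)
    (hint : Integrable (fun ω => f (fun i => X i ω)) ℙ)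
    (hbd : ∀ x y : ∀ i, 𝒳 i, |f x - f y| ≤ ∑ i, if x i ≠ y i then c i else 0)
    (ε : ℝ) (hε : 0 ≤ ε) :
    ℙ {ω | f (fun i => X i ω) ≥ (∫ ω, f (fun i => X i ω)) + ε}
      ≤ ENNReal.ofReal (Real.exp (-2 * ε ^ 2 / ∑ i, c i ^ 2)) :=
  mcdiarmid_bounded_differences_general X hXm hXindep c f hf hbd ε hε
end

section
/- Main theorem (two-sided corollary): Let X_1, ..., X_n be independent random variables with X_i taking values in 𝒳_i, X = (X_1, ..., X_n), and let 𝒴 ⊆ 𝒳 be a measurable subset with p = 1 − P[X ∈ 𝒴] < 1. Let f : 𝒳 → ℝ be measurable with c-bounded differences on 𝒴, i.e. |f(x) − f(y)| ≤ d_c(x, y) for all x, y ∈ 𝒴, and let m = E[f(X) | X ∈ 𝒴]. Then for all ε ≥ 0, P[|f(X) − m| ≥ ε] ≤ 2·(p + exp(−2((ε − p·c̄)⁺)² / Σ_{i=1}^n c_i²)), where c̄ = Σ_{i=1}^n c_i and a⁺ = max(a, 0). -/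
open MeasureTheory ProbabilityTheory
open scoped Classical

open Filter Function Real
open scoped ENNReal NNReal

/-!
McShane's extension `g x = inf_{y ∈ 𝒴} (f y + d_c(x, y))` agrees with `f` on `𝒴`, has `c`-bounded
differences everywhere and is at most `m + c̄`, so `E g ≤ (1 - p) m + p (m + c̄)`. McDiarmid's
inequality for `g` then bounds `P[X ∈ 𝒴, f X ≥ m + ε]`, and `P[X ∉ 𝒴] = p` accounts for the rest;
applying this to `f` and `-f` gives the two-sided bound.

The McShane infimum need not be measurable, so the infimum over the `y` that differ from `x` on a
set `s` of coordinates is replaced by an essential infimum over those coordinates. The resulting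
extension has bounded differences only off a null set, which is all the proof of McDiarmid's
inequality needs: it integrates out one coordinate at a time, applying Hoeffding's lemma to the
conditional mean.
-/

lemma mgf_le_of_mem_Icc {α : Type*} [MeasurableSpace α] {ν : Measure α} [IsProbabilityMeasure ν]
    {φ : α → ℝ} (hφ : AEMeasurable φ ν) {a C : ℝ} (hb : ∀ᵐ x ∂ν, φ x ∈ Set.Icc a (a + C))
    (t : ℝ) :
    mgf φ ν t ≤ exp (t * ∫ x, φ x ∂ν + t ^ 2 * C ^ 2 / 8) := by
  have hcentered := (hasSubgaussianMGF_of_mem_Icc hφ hb).mgf_le t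
  have hshift : mgf φ ν t = mgf (fun x => φ x - ∫ x, φ x ∂ν) ν t * exp (t * ∫ x, φ x ∂ν) := by
    rw [← mgf_add_const]; simp
  have hC : ((‖a + C - a‖₊ / 2) ^ 2 : ℝ≥0) * t ^ 2 / 2 = t ^ 2 * C ^ 2 / 8 := by
    simp only [add_sub_cancel_left, NNReal.coe_pow, NNReal.coe_div, coe_nnnorm, Real.norm_eq_abs,
      NNReal.coe_ofNat, div_pow, sq_abs]
    ring
  rw [hshift, exp_add, mul_comm (exp _), ← hC]
  exact mul_le_mul_of_nonneg_right hcentered (exp_pos _).le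

lemma exists_ae_mem_Icc_of_le_add {α : Type*} [MeasurableSpace α] {ν : Measure α} [NeZero ν]
    {φ : α → ℝ} (hφ : BddAbove (Set.range φ)) {C : ℝ} (h : ∀ᵐ a' ∂ν, ∀ a, φ a ≤ φ a' + C) :
    ∃ a₀, ∀ᵐ a ∂ν, φ a ∈ Set.Icc a₀ (a₀ + C) := by
  obtain ⟨a', -⟩ := h.exists
  have : Nonempty α := ⟨a'⟩
  refine ⟨(⨆ a, φ a) - C, ?_⟩
  filter_upwards [h] with a ha
  exact ⟨by linarith [ciSup_le ha], by linarith [le_ciSup hφ a]⟩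

lemma integral_le_setAverage_add {α : Type*} [MeasurableSpace α] {ν : Measure α}
    [IsProbabilityMeasure ν] {Y : Set α} (hY : MeasurableSet Y) {f g : α → ℝ}
    (hg : Integrable g ν) (hfg : ∀ x ∈ Y, g x = f x) {C : ℝ}
    (hgC : ∀ x, g x ≤ (⨍ x in Y, f x ∂ν) + C) :
    ∫ x, g x ∂ν ≤ (⨍ x in Y, f x ∂ν) + ν.real Yᶜ * C := by
  set m := ⨍ x in Y, f x ∂ν
  have hin : ∫ x in Y, g x ∂ν = ν.real Y * m := by
    rw [setIntegral_congr_fun hY hfg, ← measure_smul_setAverage _ (measure_ne_top _ _), smul_eq_mul]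
  have hout : ∫ x in Yᶜ, g x ∂ν ≤ ν.real Yᶜ * (m + C) := by
    rw [← smul_eq_mul, ← setIntegral_const]
    exact setIntegral_mono_on hg.integrableOn (integrableOn_const (measure_ne_top _ _))
      hY.compl fun x _ => hgC x
  rw [← integral_add_compl hY hg]
  linear_combination hout + hin + m * probReal_add_probReal_compl (μ := ν) hY

lemma updateFinset_update_of_notMem {ι : Type*} [DecidableEq ι] {β : ι → Type*} {s : Finset ι}
    {i : ι} (hi : i ∉ s) (x : ∀ j, β j) (a : β i) (y : ∀ j : s, β j) :
    updateFinset (update x i a) s y = update (updateFinset x s y) i a := by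
  ext j
  rcases eq_or_ne j i with rfl | hj
  · simp [updateFinset_def, hi]
  · by_cases hjs : j ∈ s <;> simp [updateFinset_def, hj, hjs]

lemma sum_ite_ne_le_sum_of_eq_of_notMem {ι : Type*} [Fintype ι] {β : ι → Type*} {c : ι → ℝ}
    (hc : ∀ i, 0 ≤ c i) {s : Finset ι} {x y : ∀ i, β i} (h : ∀ i ∉ s, x i = y i) :
    (∑ i, if x i ≠ y i then c i else 0) ≤ ∑ i ∈ s, c i := by
  calc (∑ i, if x i ≠ y i then c i else 0) ≤ ∑ i, if i ∈ s then c i else 0 :=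
        Finset.sum_le_sum fun i _ => by split_ifs <;> simp_all
    _ = ∑ i ∈ s, c i := by rw [Finset.sum_ite_mem, Finset.univ_inter]

lemma mem_Icc_of_abs_sub_le_sum {ι : Type*} [Fintype ι] {β : ι → Type*} {Y : Set (∀ i, β i)}
    {f : (∀ i, β i) → ℝ} {c : ι → ℝ} (hc : ∀ i, 0 ≤ c i)
    (hbd : ∀ x ∈ Y, ∀ y ∈ Y, |f x - f y| ≤ ∑ i, if x i ≠ y i then c i else 0)
    {y : ∀ i, β i} (hy : y ∈ Y) {x : ∀ i, β i} (hx : x ∈ Y) :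
    f x ∈ Set.Icc (f y - ∑ i, c i) (f y + ∑ i, c i) := by
  have := (hbd x hx y hy).trans (sum_ite_ne_le_sum_of_eq_of_notMem hc (s := Finset.univ)
    fun i hi => (hi (Finset.mem_univ i)).elim)
  constructor <;> linarith [abs_le.1 this]

section Lmarginal

variable {ι : Type*} [DecidableEq ι] {𝒳 : ι → Type*} [∀ i, MeasurableSpace (𝒳 i)]
  {μ : ∀ i, Measure (𝒳 i)}

lemma ae_lmarginal_update_eq_zero [∀ i, SigmaFinite (μ i)] {F : (∀ i, 𝒳 i) → ℝ≥0∞}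
    (hF : Measurable F) {s : Finset ι} {i : ι} (hi : i ∉ s) {x : ∀ i, 𝒳 i}
    (hx : (∫⋯∫⁻_insert i s, F ∂μ) x = 0) :
    ∀ᵐ a ∂μ i, (∫⋯∫⁻_s, F ∂μ) (update x i a) = 0 := by
  rw [lmarginal_insert _ hF hi] at hx
  exact (lintegral_eq_zero_iff ((hF.lmarginal μ).comp (measurable_update x))).1 hx

lemma lmarginal_ofReal_le [∀ i, IsProbabilityMeasure (μ i)] {g : (∀ i, 𝒳 i) → ℝ} {C : ℝ}
    (hgC : ∀ x, g x ≤ C) (s : Finset ι) (x : ∀ i, 𝒳 i) :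
    (∫⋯∫⁻_s, (fun z => ENNReal.ofReal (g z)) ∂μ) x ≤ ENNReal.ofReal C :=
  calc (∫⋯∫⁻_s, (fun z => ENNReal.ofReal (g z)) ∂μ) x
      ≤ (∫⋯∫⁻_s, (fun _ => ENNReal.ofReal C) ∂μ) x :=
        lmarginal_mono (fun z => ENNReal.ofReal_le_ofReal (hgC z)) x
    _ = ENNReal.ofReal C := by simp [lmarginal]

lemma lintegral_pi_eq_zero_of_lintegral_update_eq_zero [Fintype ι]
    [∀ i, IsProbabilityMeasure (μ i)] {F : (∀ i, 𝒳 i) → ℝ≥0∞}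
    (hF : Measurable F) (i : ι) (h : ∀ x, ∫⁻ a, F (update x i a) ∂μ i = 0) :
    ∫⁻ x, F x ∂Measure.pi μ = 0 := by
  obtain ⟨x₀⟩ := nonempty_of_isProbabilityMeasure (Measure.pi μ)
  rw [lintegral_eq_lmarginal_univ x₀, lmarginal_erase' _ hF (Finset.mem_univ i)]
  simp [h, lmarginal]

lemma pi_setOf_lmarginal_insert_eq_zero_and_ne_zero [Fintype ι]
    [∀ i, IsProbabilityMeasure (μ i)] {F : (∀ i, 𝒳 i) → ℝ≥0∞} (hF : Measurable F)
    (i : ι) (s : Finset ι) :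
    Measure.pi μ {x | (∫⋯∫⁻_insert i s, F ∂μ) x = 0 ∧ (∫⋯∫⁻_s, F ∂μ) x ≠ 0} = 0 := by
  by_cases hi : i ∈ s
  · simp [Finset.insert_eq_of_mem hi]
  set E := {x | (∫⋯∫⁻_insert i s, F ∂μ) x = 0 ∧ (∫⋯∫⁻_s, F ∂μ) x ≠ 0}
  have hE : MeasurableSet E :=
    ((hF.lmarginal μ) (measurableSet_singleton 0)).inter
      ((hF.lmarginal μ) (measurableSet_singleton 0)).compl
  rw [← lintegral_indicator_one hE]
  refine lintegral_pi_eq_zero_of_lintegral_update_eq_zero (measurable_one.indicator hE) i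
    fun w => ?_
  by_cases hw : (∫⋯∫⁻_insert i s, F ∂μ) w = 0
  · refine (lintegral_eq_zero_iff ((measurable_one.indicator hE).comp (measurable_update w))).2 ?_
    filter_upwards [ae_lmarginal_update_eq_zero hF hi hw] with a ha
    simp [E, ha]
  · have hnot : ∀ a, update w i a ∉ E := fun a ha =>
      hw (lmarginal_update_of_mem μ (Finset.mem_insert_self i s) F w a ▸ ha.1)
    simp [hnot]

end Lmarginal

section BoundedDifferences

variable {ι : Type*} [DecidableEq ι] {𝒳 : ι → Type*} [∀ i, MeasurableSpace (𝒳 i)]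
  {μ : ∀ i, Measure (𝒳 i)} [∀ i, IsProbabilityMeasure (μ i)]

lemma lmarginal_update_le_add {g : (∀ i, 𝒳 i) → ℝ} {B : Set (∀ i, 𝒳 i)} (hB : MeasurableSet B)
    {c : ι → ℝ} (hg : ∀ x ∉ B, ∀ i a, g (update x i a) ≤ g x + c i) {s : Finset ι} {i : ι}
    (hi : i ∉ s) {x : ∀ i, 𝒳 i} (hx : (∫⋯∫⁻_s, B.indicator 1 ∂μ) x = 0) (a : 𝒳 i) :
    (∫⋯∫⁻_s, (fun z => ENNReal.ofReal (g z)) ∂μ) (update x i a)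
      ≤ (∫⋯∫⁻_s, (fun z => ENNReal.ofReal (g z)) ∂μ) x + ENNReal.ofReal (c i) := by
  have hgood : ∀ᵐ y ∂Measure.pi (fun j : s => μ j), updateFinset x s y ∉ B := by
    filter_upwards [(lintegral_eq_zero_iff
      ((measurable_one.indicator hB).comp measurable_updateFinset)).1 hx] with y hy hmem
    simp [hmem] at hy
  calc (∫⋯∫⁻_s, (fun z => ENNReal.ofReal (g z)) ∂μ) (update x i a)
      ≤ ∫⁻ y, (ENNReal.ofReal (g (updateFinset x s y)) + ENNReal.ofReal (c i))
          ∂Measure.pi (fun j : s => μ j) := by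
        refine lintegral_mono_ae ?_
        filter_upwards [hgood] with y hy
        rw [updateFinset_update_of_notMem hi]
        exact (ENNReal.ofReal_le_ofReal (hg _ hy i a)).trans ENNReal.ofReal_add_le
    _ = _ := by
        rw [lintegral_add_right _ measurable_const, lintegral_const, measure_univ, mul_one]
        rfl

lemma exists_ae_lmarginal_update_mem_Icc {g : (∀ i, 𝒳 i) → ℝ} {C : ℝ} (hgC : ∀ x, g x ≤ C)
    {c : ι → ℝ} (hc : ∀ i, 0 ≤ c i) {B : Set (∀ i, 𝒳 i)} (hB : MeasurableSet B)
    (hLip : ∀ x ∉ B, ∀ i a, g (update x i a) ≤ g x + c i) {s : Finset ι} {i : ι} (hi : i ∉ s)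
    {x : ∀ i, 𝒳 i} (hx : (∫⋯∫⁻_insert i s, B.indicator 1 ∂μ) x = 0) :
    ∃ a₀, ∀ᵐ a ∂μ i, ((∫⋯∫⁻_s, (fun z => ENNReal.ofReal (g z)) ∂μ) (update x i a)).toReal
      ∈ Set.Icc a₀ (a₀ + c i) := by
  have hG_ne_top : ∀ y, (∫⋯∫⁻_s, (fun z => ENNReal.ofReal (g z)) ∂μ) y ≠ ∞ :=
    fun y => ne_top_of_le_ne_top ENNReal.ofReal_ne_top (lmarginal_ofReal_le hgC s y)
  refine exists_ae_mem_Icc_of_le_add ⟨max C 0, ?_⟩ ?_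
  · rintro _ ⟨a, rfl⟩
    simpa [ENNReal.toReal_ofReal'] using ENNReal.toReal_mono ENNReal.ofReal_ne_top
      (lmarginal_ofReal_le (μ := μ) hgC s (update x i a))
  · filter_upwards [ae_lmarginal_update_eq_zero (measurable_one.indicator hB) hi hx] with a' ha' a
    have h := lmarginal_update_le_add hB hLip hi ha' a
    rw [update_idem] at h
    simpa [ENNReal.toReal_add (hG_ne_top _) ENNReal.ofReal_ne_top, hc i] using
      ENNReal.toReal_mono (by simp [hG_ne_top]) h

lemma lmarginal_exp_mul_le {g : (∀ i, 𝒳 i) → ℝ} (hg : Measurable g) {C : ℝ}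
    (hg0 : ∀ x, 0 ≤ g x) (hgC : ∀ x, g x ≤ C) {c : ι → ℝ} (hc : ∀ i, 0 ≤ c i)
    {B : Set (∀ i, 𝒳 i)} (hB : MeasurableSet B)
    (hLip : ∀ x ∉ B, ∀ i a, g (update x i a) ≤ g x + c i) (t : ℝ) (s : Finset ι)
    {x : ∀ i, 𝒳 i} (hx : (∫⋯∫⁻_s, B.indicator 1 ∂μ) x = 0) :
    (∫⋯∫⁻_s, (fun z => ENNReal.ofReal (exp (t * g z))) ∂μ) x
      ≤ ENNReal.ofReal (exp (t * ((∫⋯∫⁻_s, (fun z => ENNReal.ofReal (g z)) ∂μ) x).toReal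
          + t ^ 2 * (∑ i ∈ s, c i ^ 2) / 8)) := by
  have hG : Measurable fun z => ENNReal.ofReal (g z) := hg.ennreal_ofReal
  have hE : Measurable fun z => ENNReal.ofReal (exp (t * g z)) :=
    (measurable_exp.comp (hg.const_mul t)).ennreal_ofReal
  induction s using Finset.induction_on generalizing x with
  | empty => simp [ENNReal.toReal_ofReal (hg0 x)]
  | @insert i s hi ih =>
    set φ : 𝒳 i → ℝ :=
      fun a => ((∫⋯∫⁻_s, (fun z => ENNReal.ofReal (g z)) ∂μ) (update x i a)).toReal
    set K := t ^ 2 * (∑ j ∈ s, c j ^ 2) / 8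
    have hφ : Measurable φ := ((hG.lmarginal μ).comp (measurable_update x)).ennreal_toReal
    obtain ⟨a₀, hφ_mem⟩ := exists_ae_lmarginal_update_mem_Icc hgC hc hB hLip hi hx
    have hφ_int : ∫ a, φ a ∂μ i
        = ((∫⋯∫⁻_insert i s, (fun z => ENNReal.ofReal (g z)) ∂μ) x).toReal := by
      rw [lmarginal_insert _ hG hi]
      exact integral_toReal ((hG.lmarginal μ).comp (measurable_update x)).aemeasurable
        (Eventually.of_forall fun a => (lmarginal_ofReal_le hgC s _).trans_lt ENNReal.ofReal_lt_top)
    have hexp_int : Integrable (fun a => exp (t * φ a) * exp K) (μ i) :=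
      (integrable_exp_mul_of_mem_Icc hφ.aemeasurable hφ_mem).mul_const _
    rw [lmarginal_insert _ hE hi, ← hφ_int, Finset.sum_insert hi]
    calc ∫⁻ a, (∫⋯∫⁻_s, (fun z => ENNReal.ofReal (exp (t * g z))) ∂μ) (update x i a) ∂μ i
        ≤ ∫⁻ a, ENNReal.ofReal (exp (t * φ a) * exp K) ∂μ i := by
          refine lintegral_mono_ae ?_
          filter_upwards [ae_lmarginal_update_eq_zero (measurable_one.indicator hB) hi hx]
            with a ha
          rw [← exp_add]
          exact ih ha
      _ = ENNReal.ofReal (mgf φ (μ i) t * exp K) := by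
          rw [← ofReal_integral_eq_lintegral_ofReal hexp_int
            (Eventually.of_forall fun a => by positivity), integral_mul_const]
          rfl
      _ ≤ ENNReal.ofReal (exp (t * ∫ a, φ a ∂μ i + t ^ 2 * c i ^ 2 / 8) * exp K) := by
          gcongr
          exact mgf_le_of_mem_Icc hφ.aemeasurable hφ_mem t
      _ = _ := by
          rw [← exp_add]
          congr 2
          ring

variable [Fintype ι]

lemma mgf_le_of_update_le_add {g : (∀ i, 𝒳 i) → ℝ} (hg : Measurable g) {C : ℝ}
    (hg_mem : ∀ x, g x ∈ Set.Icc 0 C) {c : ι → ℝ} (hc : ∀ i, 0 ≤ c i)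
    {B : Set (∀ i, 𝒳 i)} (hB : MeasurableSet B) (hB0 : Measure.pi μ B = 0)
    (hLip : ∀ x ∉ B, ∀ i a, g (update x i a) ≤ g x + c i) (t : ℝ) :
    mgf g (Measure.pi μ) t ≤ exp (t * ∫ x, g x ∂Measure.pi μ + t ^ 2 * (∑ i, c i ^ 2) / 8) := by
  obtain ⟨x₀⟩ := nonempty_of_isProbabilityMeasure (Measure.pi μ)
  have hx₀ : (∫⋯∫⁻_Finset.univ, B.indicator 1 ∂μ) x₀ = 0 := by
    simp [lintegral_indicator_one hB, hB0]
  have h := lmarginal_exp_mul_le hg (fun x => (hg_mem x).1) (fun x => (hg_mem x).2) hc hB hLip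
    t Finset.univ hx₀
  have hexp_int : Integrable (fun x => exp (t * g x)) (Measure.pi μ) :=
    integrable_exp_mul_of_mem_Icc hg.aemeasurable (Eventually.of_forall hg_mem)
  rw [lmarginal_univ, lmarginal_univ, ← integral_eq_lintegral_of_nonneg_ae
    (Eventually.of_forall fun x => (hg_mem x).1) hg.aestronglyMeasurable,
    ← ofReal_integral_eq_lintegral_ofReal hexp_int
    (Eventually.of_forall fun x => (exp_pos _).le),
    ENNReal.ofReal_le_ofReal_iff (exp_pos _).le] at h
  exact h

theorem hasSubgaussianMGF_of_update_le_add {g : (∀ i, 𝒳 i) → ℝ} (hg : Measurable g) {lo hi : ℝ}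
    (hg_mem : ∀ x, g x ∈ Set.Icc lo hi) {c : ι → ℝ} (hc : ∀ i, 0 ≤ c i)
    {B : Set (∀ i, 𝒳 i)} (hB : MeasurableSet B) (hB0 : Measure.pi μ B = 0)
    (hLip : ∀ x ∉ B, ∀ i a, g (update x i a) ≤ g x + c i) :
    HasSubgaussianMGF (fun x => g x - ∫ x, g x ∂Measure.pi μ) (∑ i, c i ^ 2 / 4).toNNReal
      (Measure.pi μ) where
  integrable_exp_mul t := integrable_exp_mul_of_mem_Icc (hg.sub measurable_const).aemeasurable
    (Eventually.of_forall fun x => ⟨sub_le_sub_right (hg_mem x).1 _,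
      sub_le_sub_right (hg_mem x).2 _⟩)
  mgf_le t := by
    have hshift : (fun x => g x - ∫ x, g x ∂Measure.pi μ)
        = fun x => (g x - lo) + -∫ x, (g x - lo) ∂Measure.pi μ := by
      ext x
      rw [integral_sub (Integrable.of_mem_Icc lo hi hg.aemeasurable
        (Eventually.of_forall hg_mem)) (integrable_const lo)]
      simp
    have h := mgf_le_of_update_le_add (g := fun x => g x - lo) (hg.sub measurable_const)
      (fun x => ⟨sub_nonneg.2 (hg_mem x).1, sub_le_sub_right (hg_mem x).2 lo⟩) hc hB hB0
      (fun x hx i a => by linarith [hLip x hx i a]) t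
    rw [hshift, mgf_add_const, Real.coe_toNNReal _ (by positivity)]
    calc _ ≤ exp (t * ∫ x, (g x - lo) ∂Measure.pi μ + t ^ 2 * (∑ i, c i ^ 2) / 8)
          * exp (t * -∫ x, (g x - lo) ∂Measure.pi μ) := by gcongr
      _ = _ := by
        rw [← exp_add, ← Finset.sum_div]
        congr 1
        ring

end BoundedDifferences

noncomputable section Extension

variable {ι : Type*} [DecidableEq ι] {𝒳 : ι → Type*} [∀ i, MeasurableSpace (𝒳 i)]
  (μ : ∀ i, Measure (𝒳 i)) (𝒴 : Set (∀ i, 𝒳 i)) (f : (∀ i, 𝒳 i) → ℝ) (lo hi : ℝ) (c : ι → ℝ)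

def sublevelSectionMeasure (q : ℝ) (s : Finset ι) : (∀ i, 𝒳 i) → ℝ≥0∞ :=
  ∫⋯∫⁻_s, (𝒴 ∩ {z | f z < q}).indicator 1 ∂μ

/-- The essential infimum of `f` over `{y ∈ 𝒴 | ∀ i ∉ s, y i = x i}` with respect to the product of
the `μ i`, `i ∈ s`, clamped to `[lo, hi]`. The supremum runs over rational levels so that it is
measurable in `x`. -/
def sectionEssInf (s : Finset ι) (x : ∀ i, 𝒳 i) : ℝ :=
  ⨆ q : ℚ, if (q : ℝ) ∈ Set.Icc lo hi ∧ sublevelSectionMeasure μ 𝒴 f q s x = 0 then (q : ℝ) else lo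

def essMcShaneExtension (x : ∀ i, 𝒳 i) : ℝ :=
  ⨅ s : Finset ι, sectionEssInf μ 𝒴 f lo hi s x + ∑ j ∈ s, c j

/-- Essential infima over sections are antitone in `s` only almost everywhere; this collects the
exceptions. -/
def essMcShaneExceptionalSet : Set (∀ i, 𝒳 i) :=
  ⋃ (i : ι) (s : Finset ι) (q : ℚ), {x | sublevelSectionMeasure μ 𝒴 f q (insert i s) x = 0 ∧
    sublevelSectionMeasure μ 𝒴 f q s x ≠ 0}

variable {μ 𝒴 f lo hi c}

lemma measurable_sublevelSectionMeasure [∀ i, SigmaFinite (μ i)] (h𝒴 : MeasurableSet 𝒴)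
    (hf : Measurable f) (q : ℝ) (s : Finset ι) : Measurable (sublevelSectionMeasure μ 𝒴 f q s) :=
  (measurable_one.indicator (h𝒴.inter (measurableSet_lt hf measurable_const))).lmarginal μ

lemma measurable_sectionEssInf [∀ i, SigmaFinite (μ i)] (h𝒴 : MeasurableSet 𝒴)
    (hf : Measurable f) (s : Finset ι) :
    Measurable (sectionEssInf μ 𝒴 f lo hi s) :=
  Measurable.iSup fun q => Measurable.ite
    ((MeasurableSet.const _).inter
      (measurable_sublevelSectionMeasure h𝒴 hf q s (measurableSet_singleton 0)))
    measurable_const measurable_const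

lemma bddAbove_range_sectionEssInf (s : Finset ι) (x : ∀ i, 𝒳 i) :
    BddAbove (Set.range fun q : ℚ => if (q : ℝ) ∈ Set.Icc lo hi ∧
      sublevelSectionMeasure μ 𝒴 f q s x = 0 then (q : ℝ) else lo) := by
  refine ⟨max lo hi, ?_⟩
  rintro _ ⟨q, rfl⟩
  dsimp only
  split_ifs with hq
  exacts [hq.1.2.trans (le_max_right _ _), le_max_left _ _]

lemma le_sectionEssInf {q : ℚ} {s : Finset ι} {x : ∀ i, 𝒳 i} (hq : (q : ℝ) ∈ Set.Icc lo hi)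
    (hN : sublevelSectionMeasure μ 𝒴 f q s x = 0) : (q : ℝ) ≤ sectionEssInf μ 𝒴 f lo hi s x :=
  le_ciSup_of_le (bddAbove_range_sectionEssInf s x) q (by rw [if_pos ⟨hq, hN⟩])

lemma lo_le_sectionEssInf (s : Finset ι) (x : ∀ i, 𝒳 i) : lo ≤ sectionEssInf μ 𝒴 f lo hi s x :=
  le_ciSup_of_le (bddAbove_range_sectionEssInf s x) 0 (by split_ifs with h <;> [exact h.1.1; rfl])

lemma sectionEssInf_le {r : ℝ} {s : Finset ι} {x : ∀ i, 𝒳 i} (hlo : lo ≤ r)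
    (h : ∀ q : ℚ, (q : ℝ) ∈ Set.Icc lo hi → sublevelSectionMeasure μ 𝒴 f q s x = 0 → (q : ℝ) ≤ r) :
    sectionEssInf μ 𝒴 f lo hi s x ≤ r :=
  ciSup_le fun q => by split_ifs with hq <;> [exact h q hq.1 hq.2; exact hlo]

lemma sublevelSectionMeasure_eq_zero [Fintype ι] (hc : ∀ i, 0 ≤ c i)
    (hbd : ∀ x ∈ 𝒴, ∀ y ∈ 𝒴, |f x - f y| ≤ ∑ i, if x i ≠ y i then c i else 0)
    {x : ∀ i, 𝒳 i} (hx : x ∈ 𝒴) {q : ℝ} {s : Finset ι} (hq : q ≤ f x - ∑ j ∈ s, c j) :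
    sublevelSectionMeasure μ 𝒴 f q s x = 0 := by
  refine (lintegral_congr fun y => Set.indicator_of_notMem ?_ _).trans lintegral_zero
  rintro ⟨hz, hzq : f _ < q⟩
  have hdist : f x - f (updateFinset x s y) ≤ ∑ j ∈ s, c j :=
    (abs_le.1 (hbd x hx _ hz)).2.trans
      (sum_ite_ne_le_sum_of_eq_of_notMem hc fun i hi => by simp [updateFinset_def, hi])
  linarith

lemma sectionEssInf_le_hi (hlohi : lo ≤ hi) (s : Finset ι) (x : ∀ i, 𝒳 i) :
    sectionEssInf μ 𝒴 f lo hi s x ≤ hi :=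
  sectionEssInf_le hlohi fun _ hq _ => hq.2

lemma sectionEssInf_empty_le {x : ∀ i, 𝒳 i} (hx : x ∈ 𝒴) (hfx : lo ≤ f x) :
    sectionEssInf μ 𝒴 f lo hi ∅ x ≤ f x :=
  sectionEssInf_le hfx fun q _ hN => by
    by_contra! hlt
    simp [sublevelSectionMeasure, hx, hlt] at hN

lemma sub_sum_le_sectionEssInf [Fintype ι] (hc : ∀ i, 0 ≤ c i)
    (hbd : ∀ x ∈ 𝒴, ∀ y ∈ 𝒴, |f x - f y| ≤ ∑ i, if x i ≠ y i then c i else 0)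
    {x : ∀ i, 𝒳 i} (hx : x ∈ 𝒴) (hfx : f x ≤ hi) (s : Finset ι) :
    f x - ∑ j ∈ s, c j ≤ sectionEssInf μ 𝒴 f lo hi s x := by
  by_contra! hlt
  obtain ⟨q, hq_gt, hq_lt⟩ := exists_rat_btwn hlt
  have hs : 0 ≤ ∑ j ∈ s, c j := Finset.sum_nonneg fun j _ => hc j
  have hq : (q : ℝ) ∈ Set.Icc lo hi :=
    ⟨(lo_le_sectionEssInf s x).trans hq_gt.le, by linarith⟩
  have := le_sectionEssInf (μ := μ) hq (sublevelSectionMeasure_eq_zero hc hbd hx hq_lt.le)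
  linarith

lemma sectionEssInf_univ_le_setAverage [Fintype ι] [∀ i, IsProbabilityMeasure (μ i)]
    (h𝒴 : MeasurableSet 𝒴) (hf : Measurable f) (h𝒴0 : Measure.pi μ 𝒴 ≠ 0)
    (hfint : IntegrableOn f 𝒴 (Measure.pi μ)) (hlo : lo ≤ ⨍ x in 𝒴, f x ∂Measure.pi μ)
    (x : ∀ i, 𝒳 i) :
    sectionEssInf μ 𝒴 f lo hi Finset.univ x ≤ ⨍ x in 𝒴, f x ∂Measure.pi μ := by
  refine sectionEssInf_le hlo fun q _ hN => ?_
  have hnull : Measure.pi μ (𝒴 ∩ {z | f z < q}) = 0 := by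
    rwa [sublevelSectionMeasure, lmarginal_univ, lintegral_indicator_one
      (h𝒴.inter (measurableSet_lt hf measurable_const))] at hN
  by_contra! hlt
  refine (measure_le_setAverage_pos h𝒴0 (measure_ne_top _ _) hfint).ne' (measure_mono_null ?_ hnull)
  exact fun z hz => ⟨hz.1, hz.2.trans_lt hlt⟩

lemma sectionEssInf_update_of_mem {s : Finset ι} {i : ι} (his : i ∈ s) (x : ∀ i, 𝒳 i)
    (a : 𝒳 i) : sectionEssInf μ 𝒴 f lo hi s (update x i a) = sectionEssInf μ 𝒴 f lo hi s x := by
  unfold sectionEssInf sublevelSectionMeasure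
  simp_rw [lmarginal_update_of_mem μ his]

lemma sectionEssInf_insert_le {x : ∀ i, 𝒳 i} (hx : x ∉ essMcShaneExceptionalSet μ 𝒴 f)
    (i : ι) (s : Finset ι) :
    sectionEssInf μ 𝒴 f lo hi (insert i s) x ≤ sectionEssInf μ 𝒴 f lo hi s x := by
  refine sectionEssInf_le (lo_le_sectionEssInf s x) fun q hq hN => le_sectionEssInf hq ?_
  by_contra hne
  exact hx (Set.mem_iUnion₂.2 ⟨i, s, Set.mem_iUnion.2 ⟨q, hN, hne⟩⟩)

lemma measure_essMcShaneExceptionalSet [Fintype ι] [∀ i, IsProbabilityMeasure (μ i)]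
    (h𝒴 : MeasurableSet 𝒴) (hf : Measurable f) :
    Measure.pi μ (essMcShaneExceptionalSet μ 𝒴 f) = 0 :=
  measure_iUnion_null fun i => measure_iUnion_null fun s => measure_iUnion_null fun _ =>
    pi_setOf_lmarginal_insert_eq_zero_and_ne_zero
      (measurable_one.indicator (h𝒴.inter (measurableSet_lt hf measurable_const))) i s

lemma measurableSet_essMcShaneExceptionalSet [Countable ι] [∀ i, SigmaFinite (μ i)]
    (h𝒴 : MeasurableSet 𝒴) (hf : Measurable f) :
    MeasurableSet (essMcShaneExceptionalSet μ 𝒴 f) :=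
  .iUnion fun _ => .iUnion fun s => .iUnion fun q =>
    (measurable_sublevelSectionMeasure h𝒴 hf q _ (measurableSet_singleton 0)).inter
      (measurable_sublevelSectionMeasure h𝒴 hf q s (measurableSet_singleton 0)).compl

section Fintype

variable [Fintype ι]

lemma essMcShaneExtension_le (s : Finset ι) (x : ∀ i, 𝒳 i) :
    essMcShaneExtension μ 𝒴 f lo hi c x ≤ sectionEssInf μ 𝒴 f lo hi s x + ∑ j ∈ s, c j :=
  ciInf_le (Set.finite_range _).bddBelow s

lemma measurable_essMcShaneExtension [∀ i, SigmaFinite (μ i)] (h𝒴 : MeasurableSet 𝒴)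
    (hf : Measurable f) : Measurable (essMcShaneExtension μ 𝒴 f lo hi c) :=
  Measurable.iInf fun s => (measurable_sectionEssInf h𝒴 hf s).add_const _

lemma essMcShaneExtension_mem_Icc (hlohi : lo ≤ hi) (hc : ∀ i, 0 ≤ c i) (x : ∀ i, 𝒳 i) :
    essMcShaneExtension μ 𝒴 f lo hi c x ∈ Set.Icc lo hi := by
  refine ⟨le_ciInf fun s => ?_, ?_⟩
  · exact le_add_of_le_of_nonneg (lo_le_sectionEssInf s x) (Finset.sum_nonneg fun j _ => hc j)
  · refine (essMcShaneExtension_le ∅ x).trans ?_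
    simpa using sectionEssInf_le_hi (μ := μ) (𝒴 := 𝒴) (f := f) hlohi ∅ x

lemma essMcShaneExtension_eq_of_mem (hc : ∀ i, 0 ≤ c i)
    (hbd : ∀ x ∈ 𝒴, ∀ y ∈ 𝒴, |f x - f y| ≤ ∑ i, if x i ≠ y i then c i else 0)
    {x : ∀ i, 𝒳 i} (hx : x ∈ 𝒴) (hfx : f x ∈ Set.Icc lo hi) :
    essMcShaneExtension μ 𝒴 f lo hi c x = f x := by
  refine le_antisymm ?_ (le_ciInf fun s => ?_)
  · simpa using (essMcShaneExtension_le ∅ x).trans (by simpa using sectionEssInf_empty_le hx hfx.1)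
  · linarith [sub_sum_le_sectionEssInf (μ := μ) (lo := lo) hc hbd hx hfx.2 s]

lemma essMcShaneExtension_le_setAverage_add [∀ i, IsProbabilityMeasure (μ i)]
    (h𝒴 : MeasurableSet 𝒴) (hf : Measurable f) (h𝒴0 : Measure.pi μ 𝒴 ≠ 0)
    (hfint : IntegrableOn f 𝒴 (Measure.pi μ)) (hlo : lo ≤ ⨍ x in 𝒴, f x ∂Measure.pi μ)
    (x : ∀ i, 𝒳 i) :
    essMcShaneExtension μ 𝒴 f lo hi c x ≤ (⨍ x in 𝒴, f x ∂Measure.pi μ) + ∑ i, c i :=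
  (essMcShaneExtension_le Finset.univ x).trans
    (add_le_add_left (sectionEssInf_univ_le_setAverage h𝒴 hf h𝒴0 hfint hlo x) _)

lemma essMcShaneExtension_update_le_add (hc : ∀ i, 0 ≤ c i) {x : ∀ i, 𝒳 i}
    (hx : x ∉ essMcShaneExceptionalSet μ 𝒴 f) (i : ι) (a : 𝒳 i) :
    essMcShaneExtension μ 𝒴 f lo hi c (update x i a)
      ≤ essMcShaneExtension μ 𝒴 f lo hi c x + c i := by
  obtain ⟨s, hs⟩ := exists_eq_ciInf_of_finite
    (f := fun s : Finset ι => sectionEssInf μ 𝒴 f lo hi s x + ∑ j ∈ s, c j)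
  have hxs : essMcShaneExtension μ 𝒴 f lo hi c x = _ := hs.symm
  rw [hxs]
  by_cases his : i ∈ s
  · calc essMcShaneExtension μ 𝒴 f lo hi c (update x i a)
        ≤ sectionEssInf μ 𝒴 f lo hi s (update x i a) + ∑ j ∈ s, c j := essMcShaneExtension_le s _
      _ ≤ sectionEssInf μ 𝒴 f lo hi s x + ∑ j ∈ s, c j + c i := by
        rw [sectionEssInf_update_of_mem his]
        linarith [hc i]
  · calc essMcShaneExtension μ 𝒴 f lo hi c (update x i a)
        ≤ sectionEssInf μ 𝒴 f lo hi (insert i s) (update x i a) + ∑ j ∈ insert i s, c j :=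
          essMcShaneExtension_le _ _
      _ ≤ sectionEssInf μ 𝒴 f lo hi s x + ∑ j ∈ s, c j + c i := by
        rw [sectionEssInf_update_of_mem (Finset.mem_insert_self i s), Finset.sum_insert his]
        linarith [sectionEssInf_insert_le (lo := lo) (hi := hi) hx i s]

end Fintype

end Extension

section Concentration

variable {ι : Type*} [Fintype ι] [DecidableEq ι] {𝒳 : ι → Type*} [∀ i, MeasurableSpace (𝒳 i)]
  {μ : ∀ i, Measure (𝒳 i)} [∀ i, IsProbabilityMeasure (μ i)]
  {𝒴 : Set (∀ i, 𝒳 i)} {f : (∀ i, 𝒳 i) → ℝ} {c : ι → ℝ}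

theorem pi_setOf_setAverage_add_le_le (h𝒴 : MeasurableSet 𝒴) (hf : Measurable f)
    (hc : ∀ i, 0 ≤ c i)
    (hbd : ∀ x ∈ 𝒴, ∀ y ∈ 𝒴, |f x - f y| ≤ ∑ i, if x i ≠ y i then c i else 0)
    (h𝒴0 : Measure.pi μ 𝒴 ≠ 0) (ε : ℝ) :
    Measure.pi μ {x | x ∈ 𝒴 ∧ (⨍ x in 𝒴, f x ∂Measure.pi μ) + ε ≤ f x}
      ≤ ENNReal.ofReal (exp (-2 * max (ε - (Measure.pi μ).real 𝒴ᶜ * ∑ i, c i) 0 ^ 2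
          / ∑ i, c i ^ 2)) := by
  set ν := Measure.pi μ
  set m := ⨍ x in 𝒴, f x ∂ν
  set t := ε - ν.real 𝒴ᶜ * ∑ i, c i
  rcases le_or_gt t 0 with ht | ht
  · simpa [max_eq_right ht] using prob_le_one
  obtain ⟨y, hy⟩ := nonempty_of_measure_ne_zero h𝒴0
  set lo := f y - ∑ i, c i
  set hi := f y + ∑ i, c i
  have hf_mem : ∀ x ∈ 𝒴, f x ∈ Set.Icc lo hi := fun x hx => mem_Icc_of_abs_sub_le_sum hc hbd hy hx
  have hfint : IntegrableOn f 𝒴 ν :=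
    Integrable.of_mem_Icc _ _ hf.aemeasurable
      ((ae_restrict_iff' h𝒴).2 (Eventually.of_forall hf_mem))
  have hlo : lo ≤ m := by
    obtain ⟨x, hx, hxm⟩ := exists_le_setAverage h𝒴0 (measure_ne_top _ _) hfint
    exact (hf_mem x hx).1.trans hxm
  set g := essMcShaneExtension μ 𝒴 f lo hi c
  have hg_mem : ∀ x, g x ∈ Set.Icc lo hi :=
    essMcShaneExtension_mem_Icc ((hf_mem y hy).1.trans (hf_mem y hy).2) hc
  have hg_eq : ∀ x ∈ 𝒴, g x = f x := fun x hx =>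
    essMcShaneExtension_eq_of_mem hc hbd hx (hf_mem x hx)
  have hmean : ∫ x, g x ∂ν ≤ m + ν.real 𝒴ᶜ * ∑ i, c i :=
    integral_le_setAverage_add h𝒴 (Integrable.of_mem_Icc _ _
      (measurable_essMcShaneExtension h𝒴 hf).aemeasurable (Eventually.of_forall hg_mem)) hg_eq
      (essMcShaneExtension_le_setAverage_add h𝒴 hf h𝒴0 hfint hlo)
  have hsubG := hasSubgaussianMGF_of_update_le_add (measurable_essMcShaneExtension h𝒴 hf) hg_mem hc
    (measurableSet_essMcShaneExceptionalSet h𝒴 hf) (measure_essMcShaneExceptionalSet h𝒴 hf)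
    fun x hx i a => essMcShaneExtension_update_le_add hc hx i a
  calc ν {x | x ∈ 𝒴 ∧ m + ε ≤ f x} ≤ ν {x | t ≤ g x - ∫ x, g x ∂ν} :=
        measure_mono fun x ⟨hx, hfx⟩ => by
          change t ≤ g x - _
          rw [hg_eq x hx]
          linarith
    _ = ENNReal.ofReal (ν.real {x | t ≤ g x - ∫ x, g x ∂ν}) :=
        (ofReal_measureReal (measure_ne_top _ _)).symm
    _ ≤ _ := by
      refine ENNReal.ofReal_le_ofReal ((hsubG.measure_ge_le ht.le).trans_eq ?_)
      rw [max_eq_left ht.le, Real.coe_toNNReal _ (by positivity), ← Finset.sum_div]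
      congr 1
      ring

theorem pi_setOf_le_abs_sub_setAverage_le (h𝒴 : MeasurableSet 𝒴) (hf : Measurable f)
    (hc : ∀ i, 0 ≤ c i)
    (hbd : ∀ x ∈ 𝒴, ∀ y ∈ 𝒴, |f x - f y| ≤ ∑ i, if x i ≠ y i then c i else 0)
    (h𝒴0 : Measure.pi μ 𝒴 ≠ 0) (ε : ℝ) :
    Measure.pi μ {x | ε ≤ |f x - ⨍ x in 𝒴, f x ∂Measure.pi μ|}
      ≤ ENNReal.ofReal (2 * ((Measure.pi μ).real 𝒴ᶜ + exp (-2 * max (ε - (Measure.pi μ).real 𝒴ᶜ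
          * ∑ i, c i) 0 ^ 2 / ∑ i, c i ^ 2))) := by
  set ν := Measure.pi μ
  set m := ⨍ x in 𝒴, f x ∂ν
  set e := exp (-2 * max (ε - ν.real 𝒴ᶜ * ∑ i, c i) 0 ^ 2 / ∑ i, c i ^ 2)
  have hupper := pi_setOf_setAverage_add_le_le h𝒴 hf hc hbd h𝒴0 ε
  have hlower := pi_setOf_setAverage_add_le_le (f := fun x => -f x) h𝒴 hf.neg hc
    (fun x hx y hy => by rw [neg_sub_neg, abs_sub_comm]; exact hbd x hx y hy) h𝒴0 ε
  rw [average_neg] at hlower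
  calc ν {x | ε ≤ |f x - m|}
      ≤ ν (𝒴ᶜ ∪ {x | x ∈ 𝒴 ∧ m + ε ≤ f x} ∪ {x | x ∈ 𝒴 ∧ -m + ε ≤ -f x}) := by
        refine measure_mono fun x (hx : ε ≤ |f x - m|) => ?_
        by_cases hx𝒴 : x ∈ 𝒴
        · rcases le_abs'.1 hx with h | h
          · exact Or.inr ⟨hx𝒴, by linarith⟩
          · exact Or.inl (Or.inr ⟨hx𝒴, by linarith⟩)
        · exact Or.inl (Or.inl hx𝒴)
    _ ≤ ν 𝒴ᶜ + ν {x | x ∈ 𝒴 ∧ m + ε ≤ f x} + ν {x | x ∈ 𝒴 ∧ -m + ε ≤ -f x} :=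
        (measure_union_le _ _).trans (by gcongr; exact measure_union_le _ _)
    _ ≤ ENNReal.ofReal (ν.real 𝒴ᶜ) + ENNReal.ofReal e + ENNReal.ofReal e := by
        rw [ofReal_measureReal (measure_ne_top _ _)]
        exact add_le_add (add_le_add le_rfl hupper) hlower
    _ ≤ ENNReal.ofReal (2 * (ν.real 𝒴ᶜ + e)) := by
        rw [← ENNReal.ofReal_add measureReal_nonneg (exp_pos _).le,
          ← ENNReal.ofReal_add (by positivity) (exp_pos _).le]
        exact ENNReal.ofReal_le_ofReal (by linarith [measureReal_nonneg (μ := ν) (s := 𝒴ᶜ)])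

end Concentration

theorem mcdiarmid_high_probability_two_sided_general
    {n : ℕ} {Ω : Type*} [MeasureSpace Ω] [IsProbabilityMeasure (ℙ : Measure Ω)]
    {𝒳 : Fin n → Type*} [∀ i, MeasurableSpace (𝒳 i)]
    (X : ∀ i, Ω → 𝒳 i) (hXm : ∀ i, Measurable (X i))
    (hXindep : iIndepFun X ℙ)
    (c : Fin n → ℝ) (hc : ∀ i, 0 ≤ c i)
    (𝒴 : Set (∀ i, 𝒳 i)) (h𝒴 : MeasurableSet 𝒴)
    (f : (∀ i, 𝒳 i) → ℝ) (hf : Measurable f)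
    (hbd : ∀ x ∈ 𝒴, ∀ y ∈ 𝒴, |f x - f y| ≤ ∑ i, if x i ≠ y i then c i else 0)
    (p m : ℝ)
    (hp : p = 1 - (ℙ {ω | (fun i => X i ω) ∈ 𝒴}).toReal)
    (hp1 : p < 1)
    (hm : m = (∫ ω, 𝒴.indicator f (fun i => X i ω)) /
        (ℙ {ω | (fun i => X i ω) ∈ 𝒴}).toReal)
    (ε : ℝ) :
    ℙ {ω | |f (fun i => X i ω) - m| ≥ ε}
      ≤ ENNReal.ofReal
          (2 * (p + Real.exp (-2 * max (ε - p * ∑ i, c i) 0 ^ 2 / ∑ i, c i ^ 2))) := by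
  set T : Ω → ∀ i, 𝒳 i := fun ω i => X i ω
  have hT : Measurable T := measurable_pi_lambda _ hXm
  set μ := fun i => (ℙ : Measure Ω).map (X i)
  have : ∀ i, IsProbabilityMeasure (μ i) := fun i =>
    Measure.isProbabilityMeasure_map (hXm i).aemeasurable
  have hlaw : (ℙ : Measure Ω).map T = Measure.pi μ :=
    hXindep.map_fun_eq_pi_map fun i => (hXm i).aemeasurable
  have hlaw_apply : ∀ S, MeasurableSet S → ℙ (T ⁻¹' S) = Measure.pi μ S := fun S hS => by
    rw [← hlaw, Measure.map_apply hT hS]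
  have h𝒴_law : ℙ {ω | T ω ∈ 𝒴} = Measure.pi μ 𝒴 := hlaw_apply 𝒴 h𝒴
  have hp' : p = (Measure.pi μ).real 𝒴ᶜ := by
    rw [hp, h𝒴_law, probReal_compl_eq_one_sub h𝒴, measureReal_def]
  have h𝒴0 : Measure.pi μ 𝒴 ≠ 0 := fun h0 => by
    simp [hp', probReal_compl_eq_one_sub h𝒴, measureReal_def, h0] at hp1
  have hm' : m = ⨍ x in 𝒴, f x ∂Measure.pi μ := by
    rw [hm, h𝒴_law, setAverage_eq, smul_eq_mul, ← integral_indicator h𝒴, ← hlaw,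
      integral_map hT.aemeasurable (hf.indicator h𝒴).aestronglyMeasurable, hlaw, measureReal_def,
      div_eq_inv_mul]
  rw [show {ω | |f (T ω) - m| ≥ ε} = T ⁻¹' {x | ε ≤ |f x - m|} from rfl,
    hlaw_apply _ (measurableSet_le measurable_const (hf.sub_const m).abs), hp', hm']
  exact pi_setOf_le_abs_sub_setAverage_le h𝒴 hf hc hbd h𝒴0 ε

/-- Main theorem (two-sided corollary): McDiarmid-type inequality for functions with bounded
differences on a high-probability subset `𝒴`. -/
theorem mcdiarmid_high_probability_two_sided
    {n : ℕ} {Ω : Type*} [MeasureSpace Ω] [IsProbabilityMeasure (ℙ : Measure Ω)]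
    {𝒳 : Fin n → Type*} [∀ i, MeasurableSpace (𝒳 i)]
    (X : ∀ i, Ω → 𝒳 i) (hXm : ∀ i, Measurable (X i))
    (hXindep : iIndepFun X ℙ)
    (c : Fin n → ℝ) (hc : ∀ i, 0 ≤ c i)
    (𝒴 : Set (∀ i, 𝒳 i)) (h𝒴 : MeasurableSet 𝒴)
    (f : (∀ i, 𝒳 i) → ℝ) (hf : Measurable f)
    (hbd : ∀ x ∈ 𝒴, ∀ y ∈ 𝒴, |f x - f y| ≤ ∑ i, if x i ≠ y i then c i else 0)
    (hint : Integrable (fun ω => 𝒴.indicator f (fun i => X i ω)) ℙ)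
    (p m : ℝ)
    (hp : p = 1 - (ℙ {ω | (fun i => X i ω) ∈ 𝒴}).toReal)
    (hp1 : p < 1)
    (hm : m = (∫ ω, 𝒴.indicator f (fun i => X i ω)) /
        (ℙ {ω | (fun i => X i ω) ∈ 𝒴}).toReal)
    (ε : ℝ) (hε : 0 ≤ ε) :
    ℙ {ω | |f (fun i => X i ω) - m| ≥ ε}
      ≤ ENNReal.ofReal
          (2 * (p + Real.exp (-2 * max (ε - p * ∑ i, c i) 0 ^ 2 / ∑ i, c i ^ 2))) :=
  mcdiarmid_high_probability_two_sided_general X hXm hXindep c hc 𝒴 h𝒴 f hf hbd p m hp hp1 hm ε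
end

section
/- Bound on the expectation of the extension: Let X be a random variable taking values in 𝒳 = ∏_{i=1}^n 𝒳_i, let 𝒴 ⊆ 𝒳 be a measurable subset with p = 1 − P[X ∈ 𝒴] and P[X ∈ 𝒴] > 0, let f : 𝒳 → ℝ be measurable with |f(x) − f(y)| ≤ d_c(x, y) for all x, y ∈ 𝒴 and f(X)·1{X ∈ 𝒴} integrable, and define f̄(x) = inf_{y ∈ 𝒴} { f(y) + d_c(x, y) }, M = E[f̄(X)], and m = E[f(X) | X ∈ 𝒴]. Then M ≤ m + p·c̄, where c̄ = Σ_{i=1}^n c_i. -/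
/-!
On `𝒴` the extension `f̄` lies below `f` (take `y = x` in the infimum), and everywhere it lies
below `f y + c̄` for every `y ∈ 𝒴`; averaging the latter over `y` distributed as `X` given
`X ∈ 𝒴` gives `f̄ ≤ m + c̄`. Splitting `E[f̄(X)]` along `{X ∈ 𝒴}` then yields
`M ≤ m (1 - p) + p (m + c̄) = m + p c̄`.
-/

open MeasureTheory
open scoped ProbabilityTheory Classical
open Set

section WeightedHamming

variable {ι : Type*} [Fintype ι] {𝒳 : ι → Type*}

noncomputable def weightedHammingDist (c : ι → ℝ) (x y : ∀ i, 𝒳 i) : ℝ :=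
  ∑ i, if x i ≠ y i then c i else 0

variable {c : ι → ℝ}

theorem weightedHammingDist_self (x : ∀ i, 𝒳 i) : weightedHammingDist c x x = 0 := by
  simp [weightedHammingDist]

theorem weightedHammingDist_nonneg (hc : ∀ i, 0 ≤ c i) (x y : ∀ i, 𝒳 i) :
    0 ≤ weightedHammingDist c x y :=
  Finset.sum_nonneg fun i _ => by split_ifs <;> simp [hc i]

theorem weightedHammingDist_le_sum (hc : ∀ i, 0 ≤ c i) (x y : ∀ i, 𝒳 i) :
    weightedHammingDist c x y ≤ ∑ i, c i :=
  Finset.sum_le_sum fun i _ => by split_ifs <;> simp [hc i]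

end WeightedHamming

section InfExtension

variable {α : Type*} {d : α → α → ℝ} {s : Set α} {f : α → ℝ}

noncomputable def infExtension (d : α → α → ℝ) (s : Set α) (f : α → ℝ) (x : α) : ℝ :=
  sInf ((fun y => f y + d x y) '' s)

theorem bddBelow_image_of_abs_sub_le {C : ℝ} (h : ∀ x ∈ s, ∀ y ∈ s, |f x - f y| ≤ C) :
    BddBelow (f '' s) := by
  rcases s.eq_empty_or_nonempty with rfl | ⟨y, hy⟩
  · simp
  refine ⟨f y - C, ?_⟩
  rintro _ ⟨x, hx, rfl⟩
  linarith [(abs_le.mp (h x hx y hy)).1]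

theorem infExtension_le (hf : BddBelow (f '' s)) (hd : ∀ x y, 0 ≤ d x y) {y : α} (hy : y ∈ s)
    (x : α) : infExtension d s f x ≤ f y + d x y := by
  refine csInf_le ?_ (mem_image_of_mem _ hy)
  obtain ⟨b, hb⟩ := hf
  refine ⟨b, ?_⟩
  rintro _ ⟨z, hz, rfl⟩
  linarith [hb (mem_image_of_mem f hz), hd x z]

theorem infExtension_le_self (hf : BddBelow (f '' s)) (hd : ∀ x y, 0 ≤ d x y)
    {x : α} (hd_self : d x x = 0) (hx : x ∈ s) : infExtension d s f x ≤ f x := by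
  simpa [hd_self] using infExtension_le hf hd hx x

end InfExtension

theorem integral_le_setIntegral_add_measureReal_compl_mul {Ω : Type*} [MeasurableSpace Ω]
    {μ : Measure Ω} [IsFiniteMeasure μ] {s : Set Ω} (hs : MeasurableSet s) {g h : Ω → ℝ} {K : ℝ}
    (hg : Integrable g μ) (hh : IntegrableOn h s μ)
    (hgh : ∀ ω ∈ s, g ω ≤ h ω) (hgK : ∀ ω ∈ sᶜ, g ω ≤ K) :
    ∫ ω, g ω ∂μ ≤ ∫ ω in s, h ω ∂μ + μ.real sᶜ * K := by
  rw [← integral_add_compl hs hg, ← smul_eq_mul, ← setIntegral_const]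
  gcongr ?_ + ?_
  · exact setIntegral_mono_on hg.integrableOn hh hs hgh
  · exact setIntegral_mono_on hg.integrableOn (integrableOn_const (measure_ne_top μ _)) hs.compl hgK

theorem extension_mean_le_cond_mean_add_p_cbar_general
    {n : ℕ} {Ω : Type*} [MeasureSpace Ω] [IsProbabilityMeasure (ℙ : Measure Ω)]
    {𝒳 : Fin n → Type*} [∀ i, MeasurableSpace (𝒳 i)]
    (X : Ω → ∀ i, 𝒳 i) (hX : Measurable X)
    (c : Fin n → ℝ) (hc : ∀ i, 0 ≤ c i)
    (𝒴 : Set (∀ i, 𝒳 i)) (h𝒴 : MeasurableSet 𝒴)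
    (hpos : 0 < ℙ (X ⁻¹' 𝒴))
    (f : (∀ i, 𝒳 i) → ℝ)
    (hbd : ∀ x ∈ 𝒴, ∀ y ∈ 𝒴, |f x - f y| ≤ ∑ i, if x i ≠ y i then c i else 0)
    (hint : Integrable (fun ω => 𝒴.indicator f (X ω)) ℙ)
    (fbar : (∀ i, 𝒳 i) → ℝ)
    (hfbar : fbar = fun x => sInf ((fun y => f y + ∑ i, if x i ≠ y i then c i else 0) '' 𝒴))
    (hfbarint : Integrable (fun ω => fbar (X ω)) ℙ)
    (p M m : ℝ)
    (hp : p = 1 - (ℙ (X ⁻¹' 𝒴)).toReal)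
    (hM : M = ∫ ω, fbar (X ω))
    (hm : m = (∫ ω, 𝒴.indicator f (X ω)) / (ℙ (X ⁻¹' 𝒴)).toReal) :
    M ≤ m + p * ∑ i, c i := by
  replace hfbar : fbar = infExtension (weightedHammingDist c) 𝒴 f := hfbar
  set S := X ⁻¹' 𝒴
  have hS : MeasurableSet S := hX h𝒴
  have hSpos : 0 < (ℙ : Measure Ω).real S := ENNReal.toReal_pos hpos.ne' (measure_ne_top _ _)
  have hindicator : (fun ω => 𝒴.indicator f (X ω)) = S.indicator (f ∘ X) := by
    simp_rw [← indicator_comp_right]; rfl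
  have hfS : IntegrableOn (fun ω => f (X ω)) S := by
    rwa [hindicator, integrable_indicator_iff hS] at hint
  have hmean : ∫ ω in S, f (X ω) = m * (ℙ : Measure Ω).real S := by
    rw [hm, hindicator, integral_indicator hS]
    exact (div_mul_cancel₀ _ hSpos.ne').symm
  have hbdd : BddBelow (f '' 𝒴) := bddBelow_image_of_abs_sub_le fun x hx y hy =>
    (hbd x hx y hy).trans (weightedHammingDist_le_sum hc x y)
  have hd := weightedHammingDist_nonneg (𝒳 := 𝒳) hc
  have hfbar_on : ∀ ω ∈ S, fbar (X ω) ≤ f (X ω) := fun ω hω =>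
    hfbar ▸ infExtension_le_self hbdd hd (weightedHammingDist_self _) hω
  have hfbar_le : ∀ x, fbar x ≤ m + ∑ i, c i := fun x => by
    have hlow : (fbar x - ∑ i, c i) * (ℙ : Measure Ω).real S ≤ m * (ℙ : Measure Ω).real S :=
      hmean ▸ setIntegral_ge_of_const_le_real hS (measure_ne_top _ _) (fun ω hω => by
        linarith [hfbar ▸ infExtension_le hbdd hd hω x, weightedHammingDist_le_sum hc x (X ω)]) hfS
    linarith [le_of_mul_le_mul_right hlow hSpos]
  have hsplit := integral_le_setIntegral_add_measureReal_compl_mul hS hfbarint hfS hfbar_on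
    fun ω _ => hfbar_le (X ω)
  rw [probReal_compl_eq_one_sub hS] at hsplit
  rw [hM, hp, ← measureReal_def]
  linear_combination hsplit + hmean

/-- Bound on the expectation of the extension: `M = E[f̄(X)] ≤ m + p c̄`. -/
theorem extension_mean_le_cond_mean_add_p_cbar
    {n : ℕ} {Ω : Type*} [MeasureSpace Ω] [IsProbabilityMeasure (ℙ : Measure Ω)]
    {𝒳 : Fin n → Type*} [∀ i, MeasurableSpace (𝒳 i)]
    (X : Ω → ∀ i, 𝒳 i) (hX : Measurable X)
    (c : Fin n → ℝ) (hc : ∀ i, 0 ≤ c i)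
    (𝒴 : Set (∀ i, 𝒳 i)) (h𝒴 : MeasurableSet 𝒴)
    (hpos : 0 < ℙ (X ⁻¹' 𝒴))
    (f : (∀ i, 𝒳 i) → ℝ) (hf : Measurable f)
    (hbd : ∀ x ∈ 𝒴, ∀ y ∈ 𝒴, |f x - f y| ≤ ∑ i, if x i ≠ y i then c i else 0)
    (hint : Integrable (fun ω => 𝒴.indicator f (X ω)) ℙ)
    (fbar : (∀ i, 𝒳 i) → ℝ)
    (hfbar : fbar = fun x => sInf ((fun y => f y + ∑ i, if x i ≠ y i then c i else 0) '' 𝒴))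
    (hfbarint : Integrable (fun ω => fbar (X ω)) ℙ)
    (p M m : ℝ)
    (hp : p = 1 - (ℙ (X ⁻¹' 𝒴)).toReal)
    (hM : M = ∫ ω, fbar (X ω))
    (hm : m = (∫ ω, 𝒴.indicator f (X ω)) / (ℙ (X ⁻¹' 𝒴)).toReal) :
    M ≤ m + p * ∑ i, c i :=
  extension_mean_le_cond_mean_add_p_cbar_general X hX c hc 𝒴 h𝒴 hpos f hbd hint fbar hfbar hfbarint
    p M m hp hM hm
end
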